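/- arXiv:2405.05106 — 5 statements merged into one kernel-verified Lean document; each statement's English description precedes it below -/
import Mathlib

section
/- If H is a subgroup of a finite group G that satisfies the Π-property in G, and N is a normal subgroup of G, then HN/N satisfies the Π-property in G/N. -/
open scoped Pointwise

/-- A subgroup `M` of `Q` is a minimal normal subgroup. -/
def IsMinimalNormal {Q : Type*} [Group Q] (M : Subgroup Q) : Prop :=
  M.Normal ∧ M ≠ ⊥ ∧ ∀ N : Subgroup Q, N.Normal → N ≤ M → N = ⊥ ∨ N = M

/-- `L/K` is a chief factor of `G`. -/
def IsChiefFactor {G : Type*} [Group G] (K L : Subgroup G) (hK : K.Normal) : Prop :=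
  L.Normal ∧ K ≤ L ∧ (letI := hK; IsMinimalNormal (L.map (QuotientGroup.mk' K)))

/-- `H` satisfies the Π-property in `G`: for every chief factor `L/K` of `G`,
every prime dividing `|G/K : N_{G/K}(HK/K ∩ L/K)|` divides `|HK/K ∩ L/K|`. -/
def PiProperty {G : Type*} [Group G] (H : Subgroup G) : Prop :=
  ∀ (K L : Subgroup G) (hK : K.Normal), IsChiefFactor K L hK →
    (letI := hK;
      ∀ q : ℕ, q.Prime →
        q ∣ (Subgroup.normalizer
              ((H.map (QuotientGroup.mk' K) ⊓ L.map (QuotientGroup.mk' K) : Subgroup (G ⧸ K)) :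
                Set (G ⧸ K))).index →
        q ∣ Nat.card ↥(H.map (QuotientGroup.mk' K) ⊓ L.map (QuotientGroup.mk' K)))

/-- `G` is `p`-soluble: every chief factor is a `p`-group or a `p'`-group. -/
def PSoluble (p : ℕ) (G : Type*) [Group G] : Prop :=
  ∀ (K L : Subgroup G) (hK : K.Normal), IsChiefFactor K L hK →
    (letI := hK;
      IsPGroup p ↥(L.map (QuotientGroup.mk' K)) ∨
      ¬ p ∣ Nat.card ↥(L.map (QuotientGroup.mk' K)))

/-- `G` is `p`-supersoluble: `p`-soluble and every chief factor of order divisible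
by `p` has order exactly `p`. -/
def PSupersoluble (p : ℕ) (G : Type*) [Group G] : Prop :=
  PSoluble p G ∧
  ∀ (K L : Subgroup G) (hK : K.Normal), IsChiefFactor K L hK →
    (letI := hK;
      p ∣ Nat.card ↥(L.map (QuotientGroup.mk' K)) →
      Nat.card ↥(L.map (QuotientGroup.mk' K)) = p)

/-- `G` is `p`-nilpotent: it has a normal subgroup of order coprime to `p`
whose index is a power of `p`. -/
def PNilpotent (p : ℕ) (G : Type*) [Group G] : Prop :=
  ∃ N : Subgroup G, N.Normal ∧ Nat.Coprime (Nat.card N) p ∧ ∃ k : ℕ, N.index = p ^ k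

/-- The Frattini subgroup: the intersection of all maximal subgroups. -/
def frattiniSubgroup (H : Type*) [Group H] : Subgroup H :=
  sInf {M : Subgroup H | IsCoatom M}

/-- `O^p(G)`: the smallest normal subgroup of `G` with `p`-group quotient. -/
def pResidual (p : ℕ) (G : Type*) [Group G] : Subgroup G :=
  sInf {N : Subgroup G | N.Normal ∧ ∀ g : G, ∃ k : ℕ, g ^ p ^ k ∈ N}

/-- `T` is subnormal in `G`. -/
def IsSubnormal {G : Type*} [Group G] (T : Subgroup G) : Prop :=
  ∃ (n : ℕ) (c : Fin (n + 1) → Subgroup G), c 0 = T ∧ c (Fin.last n) = ⊤ ∧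
    ∀ i : Fin n, c i.castSucc ≤ c i.succ ∧ ((c i.castSucc).subgroupOf (c i.succ)).Normal

/-- Two subgroups permute: `AB = BA` as sets. -/
def Permutes {G : Type*} [Group G] (A B : Subgroup G) : Prop :=
  (A : Set G) * (B : Set G) = (B : Set G) * (A : Set G)

/-- `H` is S-semipermutable in `G`: `H` permutes with every Sylow `q`-subgroup of `G`
for every prime `q` not dividing `|H|`. -/
def SSemipermutable {G : Type*} [Group G] (H : Subgroup G) : Prop :=
  ∀ q : ℕ, q.Prime → ¬ q ∣ Nat.card H → ∀ Q : Sylow q G, Permutes H Q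

section Helpers

variable {A B : Type*} [Group A] [Group B]

lemma card_map_equiv (e : A ≃* B) (S : Subgroup A) :
    Nat.card (S.map e.toMonoidHom) = Nat.card S :=
  (Nat.card_congr (Subgroup.equivMapOfInjective S e.toMonoidHom e.injective).toEquiv).symm

lemma normalizer_map_equiv (e : A ≃* B) (S : Subgroup A) :
    Subgroup.normalizer ((S.map e.toMonoidHom : Subgroup B) : Set B)
      = (Subgroup.normalizer (S : Set A)).map e.toMonoidHom := by
  rw [Subgroup.map_equiv_eq_comap_symm', Subgroup.map_equiv_eq_comap_symm',
    Subgroup.comap_normalizer_eq_of_surjective _ e.symm.surjective]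

lemma index_normalizer_map_equiv (e : A ≃* B) (S : Subgroup A) :
    (Subgroup.normalizer ((S.map e.toMonoidHom : Subgroup B) : Set B)).index
      = (Subgroup.normalizer (S : Set A)).index := by
  rw [normalizer_map_equiv]
  exact Subgroup.index_map_eq _ e.surjective
    (by rw [(MonoidHom.ker_eq_bot_iff e.toMonoidHom).mpr e.injective]; exact bot_le)

lemma isMinimalNormal_map (e : A ≃* B) {M : Subgroup A} (h : IsMinimalNormal M) :
    IsMinimalNormal (M.map e.toMonoidHom) := by
  obtain ⟨hnorm, hbot, hmin⟩ := h
  have hinj : Function.Injective e.toMonoidHom := e.injective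
  have hsurj : Function.Surjective e.toMonoidHom := e.surjective
  refine ⟨hnorm.map _ hsurj, ?_, ?_⟩
  · rw [Ne, Subgroup.map_eq_bot_iff_of_injective M hinj]; exact hbot
  · intro P hP hPle
    have hP' : (P.comap e.toMonoidHom).Normal := hP.comap _
    have hle : P.comap e.toMonoidHom ≤ M := by
      rw [← Subgroup.comap_map_eq_self_of_injective hinj M]
      exact Subgroup.comap_mono hPle
    rcases hmin _ hP' hle with h' | h'
    · left
      have := congrArg (Subgroup.map e.toMonoidHom) h'
      rwa [Subgroup.map_comap_eq_self_of_surjective hsurj, Subgroup.map_bot] at this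
    · right
      have := congrArg (Subgroup.map e.toMonoidHom) h'
      rwa [Subgroup.map_comap_eq_self_of_surjective hsurj] at this

end Helpers

theorem stmt1 {G : Type*} [Group G] [Finite G] (H N : Subgroup G) [N.Normal]
    (h : PiProperty H) : PiProperty (H.map (QuotientGroup.mk' N)) := by
  intro Kb Lb hKb hchief
  letI := hKb
  have hπ : Function.Surjective (QuotientGroup.mk' N) := QuotientGroup.mk'_surjective N
  set K := Kb.comap (QuotientGroup.mk' N) with hKdef
  set L := Lb.comap (QuotientGroup.mk' N) with hLdef
  haveI hK : K.Normal := hKb.comap _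
  have hNK : N ≤ K := by
    intro n hn
    simp only [hKdef, Subgroup.mem_comap]
    have : (QuotientGroup.mk' N) n = 1 := by
      rw [← QuotientGroup.ker_mk' N, MonoidHom.mem_ker] at hn
      · exact hn
    rw [this]; exact Kb.one_mem
  have hKeq : K.map (QuotientGroup.mk' N) = Kb :=
    Subgroup.map_comap_eq_self_of_surjective hπ Kb
  have hLeq : L.map (QuotientGroup.mk' N) = Lb :=
    Subgroup.map_comap_eq_self_of_surjective hπ Lb
  obtain ⟨hLbn, hKLb, hminb⟩ := hchief
  haveI hLn : L.Normal := hLbn.comap _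
  have hKL : K ≤ L := Subgroup.comap_mono hKLb
  haveI : (K.map (QuotientGroup.mk' N)).Normal := hKeq ▸ hKb
  let e : ((G ⧸ N) ⧸ Kb) ≃* (G ⧸ K) :=
    (QuotientGroup.quotientMulEquivOfEq hKeq.symm).trans
      (QuotientGroup.quotientQuotientEquivQuotient N K hNK)
  have hcomp : (e.toMonoidHom.comp
      (QuotientGroup.mk' Kb)).comp (QuotientGroup.mk' N) = QuotientGroup.mk' K := by
    ext g
    show e ((QuotientGroup.mk' Kb) ((QuotientGroup.mk' N) g)) = QuotientGroup.mk g
    show (QuotientGroup.quotientQuotientEquivQuotient N K hNK)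
      ((QuotientGroup.quotientMulEquivOfEq hKeq.symm)
        (QuotientGroup.mk (QuotientGroup.mk g))) = QuotientGroup.mk g
    rw [QuotientGroup.quotientMulEquivOfEq_mk]
    exact QuotientGroup.quotientQuotientEquivQuotientAux_mk_mk N K hNK g
  have hmapS : ∀ S : Subgroup G,
      ((S.map (QuotientGroup.mk' N)).map (QuotientGroup.mk' Kb)).map e.toMonoidHom
        = S.map (QuotientGroup.mk' K) := by
    intro S
    rw [Subgroup.map_map, Subgroup.map_map, hcomp]
  have hchief' : IsChiefFactor K L hK := by
    refine ⟨hLn, hKL, ?_⟩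
    have := isMinimalNormal_map e hminb
    rwa [← hLeq, hmapS L] at this
  have hdvd := h K L hK hchief'
  have hS : ((H.map (QuotientGroup.mk' N)).map (QuotientGroup.mk' Kb)
        ⊓ Lb.map (QuotientGroup.mk' Kb)).map e.toMonoidHom
      = H.map (QuotientGroup.mk' K) ⊓ L.map (QuotientGroup.mk' K) := by
    rw [Subgroup.map_inf _ _ _ (show Function.Injective e.toMonoidHom from e.injective), hmapS H, ← hLeq, hmapS L]
  intro q hq hdvdq
  have key := hdvd q hq (by rw [← hS, index_normalizer_map_equiv]; exact hdvdq)
  rwa [← hS, card_map_equiv] at key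
end

section
/- If H is an S-permutable subgroup of a finite group G (i.e., H permutes with every Sylow subgroup of G), then H satisfies the Π-property in G. -/
open scoped Pointwise

section StmtNineHelpers

variable {Γ : Type*} [Group Γ]

private lemma stmt9_coe_set_inv (A : Subgroup Γ) : (A : Set Γ)⁻¹ = (A : Set Γ) :=
  inv_coe_set

/-- The product set of two permuting subgroups is a subgroup. -/
private def stmt9_permProd (A B : Subgroup Γ)
    (hp : (A : Set Γ) * (B : Set Γ) = (B : Set Γ) * (A : Set Γ)) : Subgroup Γ where
  carrier := (A : Set Γ) * (B : Set Γ)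
  one_mem' := ⟨1, A.one_mem, 1, B.one_mem, one_mul 1⟩
  mul_mem' := by
    rintro x y ⟨a₁, ha₁, b₁, hb₁, rfl⟩ ⟨a₂, ha₂, b₂, hb₂, rfl⟩
    have hmem : b₁ * a₂ ∈ (A : Set Γ) * (B : Set Γ) := by
      rw [hp]; exact ⟨b₁, hb₁, a₂, ha₂, rfl⟩
    obtain ⟨a₃, ha₃, b₃, hb₃, h3⟩ := hmem
    refine ⟨a₁ * a₃, A.mul_mem ha₁ ha₃, b₃ * b₂, B.mul_mem hb₃ hb₂, ?_⟩
    calc a₁ * a₃ * (b₃ * b₂) = a₁ * (a₃ * b₃) * b₂ := by group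
    _ = a₁ * (b₁ * a₂) * b₂ := congrArg (fun t => a₁ * t * b₂) h3
    _ = a₁ * b₁ * (a₂ * b₂) := by group
  inv_mem' := by
    rintro x ⟨a, ha, b, hb, rfl⟩
    have hmem : (a * b)⁻¹ ∈ (B : Set Γ) * (A : Set Γ) :=
      ⟨b⁻¹, B.inv_mem hb, a⁻¹, A.inv_mem ha, (mul_inv_rev a b).symm⟩
    rwa [← hp] at hmem

private lemma stmt9_coe_permProd (A B : Subgroup Γ) (hp) :
    ((stmt9_permProd A B hp : Subgroup Γ) : Set Γ) = (A : Set Γ) * (B : Set Γ) := rfl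

private lemma stmt9_le_permProd_left (A B : Subgroup Γ) (hp) : A ≤ stmt9_permProd A B hp :=
  fun a ha => ⟨a, ha, 1, B.one_mem, mul_one a⟩

private lemma stmt9_le_permProd_right (A B : Subgroup Γ) (hp) : B ≤ stmt9_permProd A B hp :=
  fun b hb => ⟨1, A.one_mem, b, hb, one_mul b⟩

/-- Dedekind-style modular law at the level of sets. -/
private lemma stmt9_dedekind (A X : Subgroup Γ) (hAX : A ≤ X) (S : Set Γ) :
    (A : Set Γ) * (S ∩ (X : Set Γ)) = ((A : Set Γ) * S) ∩ (X : Set Γ) := by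
  ext x
  constructor
  · rintro ⟨a, ha, s, ⟨hs, hsX⟩, rfl⟩
    exact ⟨⟨a, ha, s, hs, rfl⟩, X.mul_mem (hAX ha) hsX⟩
  · rintro ⟨⟨a, ha, s, hs, rfl⟩, hx⟩
    refine ⟨a, ha, s, ⟨hs, ?_⟩, rfl⟩
    have hmem : a⁻¹ * (a * s) ∈ X := X.mul_mem (X.inv_mem (hAX ha)) hx
    simpa [mul_assoc] using hmem

/-- If a subgroup's carrier is a product set `↑A * ↑B`, it is also `↑B * ↑A`. -/
private lemma stmt9_coe_swap (W A B : Subgroup Γ)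
    (h : (W : Set Γ) = (A : Set Γ) * (B : Set Γ)) :
    (W : Set Γ) = (B : Set Γ) * (A : Set Γ) := by
  rw [← stmt9_coe_set_inv W, h, mul_inv_rev, stmt9_coe_set_inv A, stmt9_coe_set_inv B]

/-- Counting: if `↑W = ↑B * ↑A` then `|W| = |A| * k` with `k ∣ |B|`. -/
private lemma stmt9_card_div [Finite Γ] (A B W : Subgroup Γ)
    (hW : (W : Set Γ) = (B : Set Γ) * (A : Set Γ)) :
    ∃ k, Nat.card W = Nat.card A * k ∧ k ∣ Nat.card B := by
  have h1 : Nat.card ((B : Set Γ) * (A : Set Γ) : Set Γ)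
      = Nat.card A * Nat.card ((B : Set Γ).image ((↑) : Γ → Γ ⧸ A) : Set (Γ ⧸ A)) :=
    Subgroup.card_mul_eq_card_subgroup_mul_card_quotient A (B : Set Γ)
  refine ⟨Nat.card ((B : Set Γ).image ((↑) : Γ → Γ ⧸ A) : Set (Γ ⧸ A)), ?_, ?_⟩
  · rw [← h1]
    exact Nat.card_congr (Equiv.setCongr hW)
  · have horb : ((B : Set Γ).image ((↑) : Γ → Γ ⧸ A))
        = MulAction.orbit B ((1 : Γ) : Γ ⧸ A) := by
      ext z
      constructor
      · rintro ⟨b, hb, rfl⟩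
        refine ⟨⟨b, hb⟩, ?_⟩
        show (⟨b, hb⟩ : B) • ((1 : Γ) : Γ ⧸ A) = ((b : Γ) : Γ ⧸ A)
        change (b : Γ) • ((1 : Γ) : Γ ⧸ A) = ((b : Γ) : Γ ⧸ A)
        rw [MulAction.Quotient.smul_mk]
        simp
      · rintro ⟨⟨b, hb⟩, rfl⟩
        refine ⟨b, hb, ?_⟩
        symm
        show (⟨b, hb⟩ : B) • ((1 : Γ) : Γ ⧸ A) = ((b : Γ) : Γ ⧸ A)
        change (b : Γ) • ((1 : Γ) : Γ ⧸ A) = ((b : Γ) : Γ ⧸ A)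
        rw [MulAction.Quotient.smul_mk]
        simp
    rw [horb]
    have h2 : Nat.card (MulAction.orbit B ((1 : Γ) : Γ ⧸ A))
        = Nat.card ((B : Type _) ⧸ MulAction.stabilizer B ((1 : Γ) : Γ ⧸ A)) :=
      Nat.card_congr (MulAction.orbitEquivQuotientStabilizer _ _)
    rw [h2]
    exact Subgroup.card_quotient_dvd_card _

/-- Key coprimality argument: if `↑X = ↑QS * ↑A`, `↑W = ↑RS * ↑A`, with `QS` a `q`-group
and `RS` an `r`-group for distinct primes, `A ≤ W ≤ X`, then `W = A`. -/
private lemma stmt9_eq_of_prod [Finite Γ] {A QS RS X W : Subgroup Γ}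
    (hX : (X : Set Γ) = (QS : Set Γ) * (A : Set Γ))
    (hW : (W : Set Γ) = (RS : Set Γ) * (A : Set Γ))
    (hWX : W ≤ X) (hAW : A ≤ W)
    {q r : ℕ} (hq : q.Prime) (hr : r.Prime) (hrq : r ≠ q)
    (hQ : IsPGroup q QS) (hR : IsPGroup r RS) : W = A := by
  haveI : Fact q.Prime := ⟨hq⟩
  haveI : Fact r.Prime := ⟨hr⟩
  obtain ⟨kr, hkr, hkrd⟩ := stmt9_card_div A RS W hW
  obtain ⟨kq, hkq, hkqd⟩ := stmt9_card_div A QS X hX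
  obtain ⟨a, hQa⟩ := IsPGroup.iff_card.mp hQ
  obtain ⟨b, hRb⟩ := IsPGroup.iff_card.mp hR
  have hA0 : 0 < Nat.card A := Nat.card_pos
  have hdvd : Nat.card W ∣ Nat.card X := Subgroup.card_dvd_of_le hWX
  rw [hkr, hkq] at hdvd
  have hkk : kr ∣ kq := (Nat.mul_dvd_mul_iff_left hA0).mp hdvd
  have h1 : kr ∣ r ^ b := hRb ▸ hkrd
  have h2 : kr ∣ q ^ a := hQa ▸ (hkk.trans hkqd)
  have hcop : Nat.Coprime (r ^ b) (q ^ a) :=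
    Nat.Coprime.pow _ _ ((Nat.coprime_primes hr hq).mpr hrq)
  have hkr1 : kr = 1 := Nat.dvd_one.mp (hcop ▸ Nat.dvd_gcd h1 h2)
  have hcard : Nat.card W ≤ Nat.card A := by rw [hkr, hkr1, mul_one]
  exact (Subgroup.eq_of_le_of_card_ge hAW hcard).symm

end StmtNineHelpers

theorem stmt9 {G : Type*} [Group G] [Finite G] (H : Subgroup G)
    (h : ∀ q : ℕ, q.Prime → ∀ Q : Sylow q G, Permutes H (Q : Subgroup G)) :
    PiProperty H := by
  intro K L hK hL
  letI := hK
  intro q hq hqidx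
  by_contra hqD
  haveI : Fact q.Prime := ⟨hq⟩
  set f := QuotientGroup.mk' K with hfdef
  have hfs : Function.Surjective f := QuotientGroup.mk'_surjective K
  set H' := H.map f with hH'def
  set L' := L.map f with hL'def
  set D := H' ⊓ L' with hDdef
  -- `H'` permutes with every Sylow subgroup of the quotient
  have hS : ∀ r : ℕ, r.Prime → ∀ QQ : Sylow r (G ⧸ K),
      (H' : Set (G ⧸ K)) * ((QQ : Subgroup (G ⧸ K)) : Set (G ⧸ K))
        = ((QQ : Subgroup (G ⧸ K)) : Set (G ⧸ K)) * (H' : Set (G ⧸ K)) := by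
    intro r hr QQ
    haveI : Fact r.Prime := ⟨hr⟩
    obtain ⟨P, rfl⟩ := Sylow.mapSurjective_surjective hfs r QQ
    rw [Sylow.coe_mapSurjective, hH'def, Subgroup.coe_map, Subgroup.coe_map,
      ← Set.image_mul, ← Set.image_mul]
    exact congrArg (Set.image f) (h r hr P)
  -- choose a Sylow `q`-subgroup of the quotient
  obtain ⟨Qb⟩ : Nonempty (Sylow q (G ⧸ K)) := inferInstance
  have hpermQ := hS q hq Qb
  set X := stmt9_permProd H' (Qb : Subgroup (G ⧸ K)) hpermQ with hXdef
  have hH'X : H' ≤ X := stmt9_le_permProd_left _ _ _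
  have hQX : (Qb : Subgroup (G ⧸ K)) ≤ X := stmt9_le_permProd_right _ _ _
  have hXcoe : (X : Set (G ⧸ K)) = (H' : Set (G ⧸ K)) * ((Qb : Subgroup (G ⧸ K)) : Set (G ⧸ K)) :=
    rfl
  -- Claim 1 : elements of `X` of prime power order `r ^ k`, `r ≠ q`, lie in `H'`
  have hC1 : ∀ x : G ⧸ K, x ∈ X → ∀ r : ℕ, r.Prime → r ≠ q →
      (∃ k : ℕ, orderOf x = r ^ k) → x ∈ H' := by
    rintro x hx r hr hrq ⟨k, hord⟩
    haveI : Fact r.Prime := ⟨hr⟩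
    set y : (X : Subgroup (G ⧸ K)) := ⟨x, hx⟩ with hydef
    have hyo : orderOf y = r ^ k := by
      rw [← Subgroup.orderOf_coe y]; exact hord
    have hPz : IsPGroup r (Subgroup.zpowers y) :=
      IsPGroup.of_card ((Nat.card_zpowers y).trans hyo)
    obtain ⟨R, hyR⟩ := hPz.exists_le_sylow
    set R' := (R : Subgroup (X : Subgroup (G ⧸ K))).map X.subtype with hR'def
    have hR'X : R' ≤ X := Subgroup.map_subtype_le _
    have hxR' : x ∈ R' := ⟨y, hyR (Subgroup.mem_zpowers y), rfl⟩
    have hR'p : IsPGroup r R' := R.2.map _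
    obtain ⟨R'', hR''⟩ := hR'p.exists_le_sylow
    have hpermR := hS r hr R''
    -- `R' = R'' ⊓ X`
    have hint : (R'' : Subgroup (G ⧸ K)) ⊓ X = R' := by
      have hT : IsPGroup r (((R'' : Subgroup (G ⧸ K)) ⊓ X).subgroupOf X) :=
        (R''.2.to_inf_left (K := X)).of_equiv (Subgroup.subgroupOfEquivOfLe inf_le_right).symm
      have hle : (R : Subgroup (X : Subgroup (G ⧸ K)))
          ≤ ((R'' : Subgroup (G ⧸ K)) ⊓ X).subgroupOf X := by
        rw [Subgroup.subgroupOf, ← Subgroup.map_le_iff_le_comap]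
        exact le_inf hR'' hR'X
      have hmax := R.3 hT hle
      have h2 := congrArg (Subgroup.map X.subtype) hmax
      rwa [Subgroup.subgroupOf_map_subtype, inf_assoc, inf_idem] at h2
    set E := stmt9_permProd H' (R'' : Subgroup (G ⧸ K)) hpermR with hEdef
    have hEWcoe : ((E ⊓ X : Subgroup (G ⧸ K)) : Set (G ⧸ K))
        = (H' : Set (G ⧸ K)) * (R' : Set (G ⧸ K)) := by
      rw [Subgroup.coe_inf]
      have hR'co : (R' : Set (G ⧸ K))
          = ((R'' : Subgroup (G ⧸ K)) : Set (G ⧸ K)) ∩ (X : Set (G ⧸ K)) := by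
        rw [← hint, Subgroup.coe_inf]
      rw [hR'co, stmt9_dedekind H' X hH'X]
      rfl
    have hAW : H' ≤ E ⊓ X := le_inf (by rw [hEdef]; exact stmt9_le_permProd_left _ _ _) hH'X
    have hmain : E ⊓ X = H' :=
      stmt9_eq_of_prod (stmt9_coe_swap X H' (Qb : Subgroup (G ⧸ K)) hXcoe) (stmt9_coe_swap (E ⊓ X) H' R' hEWcoe)
        inf_le_right hAW hq hr hrq Qb.2 hR'p
    have hR'W : R' ≤ E ⊓ X :=
      le_inf (le_trans hR'' (by rw [hEdef]; exact stmt9_le_permProd_right _ _ _)) hR'X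
    exact hmain ▸ hR'W hxR'
  -- Claim 2 : elements of `X` of order coprime to `q` lie in `H'`
  have hC2 : ∀ n : ℕ, ∀ x : G ⧸ K, x ∈ X → orderOf x = n → ¬ q ∣ n → x ∈ H' := by
    intro n
    induction n using Nat.strong_induction_on with
    | _ n ih =>
      intro x hx hord hndvd
      rcases eq_or_ne n 1 with h1 | h1
      · have hx1 : x = 1 := orderOf_eq_one_iff.mp (h1 ▸ hord)
        rw [hx1]; exact H'.one_mem
      · have hn0 : n ≠ 0 := by
          have hpos := orderOf_pos x
          omega
        set r := n.minFac with hrdef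
        have hr : r.Prime := Nat.minFac_prime h1
        have hrn : r ∣ n := Nat.minFac_dvd n
        have hrq : r ≠ q := fun he => hndvd (he ▸ hrn)
        set a := n.factorization r with hadef
        set m := ordCompl[r] n with hmdef
        have hfact : r ^ a * m = n := Nat.ordProj_mul_ordCompl_eq_self n r
        have hm0 : 0 < m := Nat.ordCompl_pos r hn0
        have ha1 : 1 ≤ a := (Nat.Prime.factorization_pos_of_dvd hr hn0 hrn)
        have hra2 : 2 ≤ r ^ a := by
          calc (2 : ℕ) ≤ r := hr.two_le
          _ = r ^ 1 := (pow_one r).symm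
          _ ≤ r ^ a := Nat.pow_le_pow_right hr.pos ha1
        have hmlt : m < n := by
          calc m < 2 * m := by omega
          _ ≤ r ^ a * m := Nat.mul_le_mul_right m hra2
          _ = n := hfact
        have hmdvd : m ∣ n := Dvd.intro_left (r ^ a) hfact
        have hradvd : r ^ a ∣ n := Dvd.intro m hfact
        -- the two "components" of x
        set u := x ^ (r ^ a) with hudef
        set v := x ^ m with hvdef
        have hordu : orderOf u = m := by
          rw [hudef, orderOf_pow, hord, Nat.gcd_eq_right hradvd,
            ← hfact, Nat.mul_div_cancel_left m (by omega)]
        have hordv : orderOf v = r ^ a := by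
          rw [hvdef, orderOf_pow, hord, Nat.gcd_eq_right hmdvd,
            ← hfact, Nat.mul_div_cancel _ hm0]
        have hu : u ∈ H' := by
          refine ih m hmlt u (X.pow_mem hx _) hordu (fun hqm => hndvd (hqm.trans hmdvd))
        have hv : v ∈ H' :=
          hC1 v (X.pow_mem hx _) r hr hrq ⟨a, hordv⟩
        -- Bezout decomposition of x
        have hcop : Nat.Coprime (r ^ a) m := (Nat.coprime_ordCompl hr hn0).pow_left _
        have hbez := Nat.gcd_eq_gcd_ab (r ^ a) m
        have hg1 : (1 : ℤ) = (r ^ a : ℕ) * Nat.gcdA (r ^ a) m + (m : ℕ) * Nat.gcdB (r ^ a) m := by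
          rw [← Nat.cast_one, ← hcop]
          exact_mod_cast hbez
        have hxeq : x = u ^ Nat.gcdA (r ^ a) m * v ^ Nat.gcdB (r ^ a) m := by
          calc x = x ^ (1 : ℤ) := (zpow_one x).symm
          _ = x ^ ((r ^ a : ℕ) * Nat.gcdA (r ^ a) m + (m : ℕ) * Nat.gcdB (r ^ a) m) := by
              rw [← hg1]
          _ = (x ^ ((r ^ a : ℕ) : ℤ)) ^ Nat.gcdA (r ^ a) m
              * (x ^ ((m : ℕ) : ℤ)) ^ Nat.gcdB (r ^ a) m := by
              rw [zpow_add, zpow_mul, zpow_mul]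
          _ = u ^ Nat.gcdA (r ^ a) m * v ^ Nat.gcdB (r ^ a) m := by
              rw [zpow_natCast, zpow_natCast]
        rw [hxeq]
        exact H'.mul_mem (H'.zpow_mem hu _) (H'.zpow_mem hv _)
  -- `L'` is normal in the quotient
  have hL'n : L'.Normal := hL.1.map f hfs
  -- the Sylow subgroup `Qb` normalizes `D`
  have hstab : ∀ g ∈ (Qb : Subgroup (G ⧸ K)), ∀ d ∈ D, g * d * g⁻¹ ∈ D := by
    intro g hg d hd
    obtain ⟨hdH, hdL⟩ := Subgroup.mem_inf.mp hd
    refine Subgroup.mem_inf.mpr ⟨?_, hL'n.conj_mem d hdL g⟩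
    have hgX : g ∈ X := hQX hg
    have hdX : d ∈ X := hH'X hdH
    have hmemX : g * d * g⁻¹ ∈ X := X.mul_mem (X.mul_mem hgX hdX) (X.inv_mem hgX)
    have hordd : ¬ q ∣ orderOf d := fun hdv => hqD (hdv.trans (D.orderOf_dvd_natCard hd))
    have hco : orderOf (g * d * g⁻¹) = orderOf d := by
      have := orderOf_injective (MulAut.conj g).toMonoidHom (MulAut.conj g).injective d
      simpa [MulAut.conj_apply] using this
    exact hC2 (orderOf (g * d * g⁻¹)) _ hmemX rfl (hco ▸ hordd)
  have hQN : (Qb : Subgroup (G ⧸ K)) ≤ Subgroup.normalizer (D : Set (G ⧸ K)) := by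
    intro g hg
    rw [Subgroup.mem_normalizer_iff]
    intro hh
    constructor
    · exact fun hd => hstab g hg hh hd
    · intro hd
      have hmem := hstab g⁻¹ ((Qb : Subgroup (G ⧸ K)).inv_mem hg) _ hd
      have heq : g⁻¹ * (g * hh * g⁻¹) * g⁻¹⁻¹ = hh := by group
      rwa [heq] at hmem
  have hidx : (Subgroup.normalizer (D : Set (G ⧸ K))).index ∣ (Qb : Subgroup (G ⧸ K)).index :=
    Subgroup.index_dvd_of_le hQN
  exact Qb.not_dvd_index (hqidx.trans hidx)
end

section
/- Let H be a Π-normal p-subgroup of a finite group G for a prime p dividing |G|. Then H ∩ O^p(G) satisfies the Π-property in G. -/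
open scoped Pointwise

section Aux

section Helpers
variable {G : Type*} [Group G]

lemma myNormalInf {A B : Subgroup G} (hA : A.Normal) (hB : B.Normal) : (A ⊓ B).Normal :=
  ⟨fun x hx g => ⟨hA.conj_mem x hx.1 g, hB.conj_mem x hx.2 g⟩⟩

lemma myMemSupNormal {H N : Subgroup G} (hN : N.Normal) {x : G} (hx : x ∈ H ⊔ N) :
    ∃ h ∈ H, ∃ n ∈ N, h * n = x := by
  haveI := hN
  have h1 : x ∈ ((H ⊔ N : Subgroup G) : Set G) := hx
  rw [Subgroup.mul_normal] at h1
  exact Set.mem_mul.mp h1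

lemma myMapInf {Q : Type*} [Group Q] (f : G →* Q) {X L : Subgroup G} (hK : f.ker ≤ L) :
    X.map f ⊓ L.map f = (X ⊓ L).map f := by
  apply le_antisymm
  · intro y hy
    obtain ⟨hy1, hy2⟩ := Subgroup.mem_inf.mp hy
    obtain ⟨x, hxX, hxy⟩ := Subgroup.mem_map.mp hy1
    obtain ⟨l, hlL, hly⟩ := Subgroup.mem_map.mp hy2
    have hker : x * l⁻¹ ∈ f.ker := by
      rw [MonoidHom.mem_ker, map_mul, map_inv, hxy, hly, mul_inv_cancel]
    have hxL : x ∈ L := by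
      have h2 : (x * l⁻¹) * l ∈ L := mul_mem (hK hker) hlL
      simpa using h2
    exact Subgroup.mem_map.mpr ⟨x, ⟨hxX, hxL⟩, hxy⟩
  · exact le_inf (Subgroup.map_mono inf_le_left) (Subgroup.map_mono inf_le_right)

lemma myNormalizerBot {Q : Type*} [Group Q] : Subgroup.normalizer ((⊥ : Subgroup Q) : Set Q) = ⊤ := by
  rw [eq_top_iff]
  intro g _
  rw [Subgroup.mem_normalizer_iff]
  intro n
  simp [Subgroup.mem_bot]

end Helpers

lemma myPPrimeMem {G : Type*} [Group G] {p : ℕ} (hp : p.Prime) {H T : Subgroup G}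
    (hH : IsPGroup p H) (hT : IsSubnormal T) (hcov : (H : Set G) * (T : Set G) = Set.univ)
    {g : G} (hg : ¬ p ∣ orderOf g) : g ∈ T := by
  obtain ⟨n, c, hc0, hclast, hchain⟩ := hT
  have hmono : ∀ j : Fin (n+1), T ≤ c j := by
    rintro ⟨j, hj⟩
    induction j with
    | zero => rw [show (⟨0, hj⟩ : Fin (n+1)) = 0 from rfl, hc0]
    | succ m ih =>
      have hm : m < n + 1 := by omega
      have hmn : m < n := by omega
      have h1 := (hchain ⟨m, hmn⟩).1
      have e1 : (⟨m, hmn⟩ : Fin n).castSucc = (⟨m, hm⟩ : Fin (n+1)) := rfl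
      have e2 : (⟨m, hmn⟩ : Fin n).succ = (⟨m + 1, hj⟩ : Fin (n+1)) := rfl
      rw [e1, e2] at h1
      exact le_trans (ih hm) h1
  have key : ∀ m : ℕ, ∀ hm : m ≤ n, g ∈ c ⟨n - m, by omega⟩ := by
    intro m
    induction m with
    | zero =>
      intro _
      have e : (⟨n - 0, by omega⟩ : Fin (n+1)) = Fin.last n := by
        ext; simp [Fin.last]
      rw [e, hclast]; trivial
    | succ m ih =>
      intro hm
      have hU : g ∈ c ⟨n - m, by omega⟩ := ih (by omega)
      set i : Fin n := ⟨n - (m+1), by omega⟩ with hi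
      have hsucc : i.succ = (⟨n - m, by omega⟩ : Fin (n+1)) := by
        ext; simp [Fin.succ, hi]; omega
      have hU' : g ∈ c i.succ := by rw [hsucc]; exact hU
      have hgmem : g ∈ (H : Set G) * (T : Set G) := by rw [hcov]; trivial
      obtain ⟨hh, hhH, t, htT, hht⟩ := Set.mem_mul.mp hgmem
      have htV : t ∈ c i.castSucc := hmono _ htT
      have htU : t ∈ c i.succ := (hchain i).1 htV
      have hhU : hh ∈ c i.succ := by
        have e : hh = g * t⁻¹ := by rw [← hht]; group
        rw [e]; exact mul_mem hU' (inv_mem htU)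
      haveI := (hchain i).2
      set U := c i.succ with hUdef
      set φ := QuotientGroup.mk' ((c i.castSucc).subgroupOf U) with hφ
      set gU : U := ⟨g, hU'⟩ with hgU
      have hdecomp : gU = (⟨hh, hhU⟩ : U) * ⟨t, htU⟩ := by
        ext; exact hht.symm
      have ht1 : φ ⟨t, htU⟩ = 1 := by
        rw [QuotientGroup.mk'_apply, QuotientGroup.eq_one_iff]
        simpa [Subgroup.mem_subgroupOf] using htV
      have h1 : φ gU = φ ⟨hh, hhU⟩ := by
        rw [hdecomp, map_mul, ht1, mul_one]
      obtain ⟨k, hk⟩ := hH ⟨hh, hhH⟩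
      have hhpow : hh ^ p ^ k = 1 := by
        have := congrArg (fun x : H => (x : G)) hk
        simpa using this
      have hpk : (φ gU) ^ (p ^ k) = 1 := by
        rw [h1, ← map_pow]
        have e : (⟨hh, hhU⟩ : U) ^ (p ^ k) = 1 := by
          ext; simpa using hhpow
        rw [e, map_one]
      have hdvd1 : orderOf (φ gU) ∣ p ^ k := orderOf_dvd_of_pow_eq_one hpk
      have hdvd2 : orderOf (φ gU) ∣ orderOf g := by
        have e : orderOf gU = orderOf g := by
          have := orderOf_injective U.subtype Subtype.coe_injective gU
          exact this.symm
        exact e ▸ orderOf_map_dvd φ gU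
      obtain ⟨j, hj, hje⟩ := (Nat.dvd_prime_pow hp).mp hdvd1
      have hord1 : orderOf (φ gU) = 1 := by
        rcases Nat.eq_zero_or_pos j with h0 | hpos
        · rw [hje, h0, pow_zero]
        · exfalso
          apply hg
          calc p ∣ p ^ j := dvd_pow_self p hpos.ne'
            _ = orderOf (φ gU) := hje.symm
            _ ∣ orderOf g := hdvd2
      have : gU ∈ (c i.castSucc).subgroupOf U := by
        rw [← QuotientGroup.eq_one_iff]
        exact orderOf_eq_one_iff.mp hord1
      have hgV : g ∈ c i.castSucc := by
        simpa [Subgroup.mem_subgroupOf] using this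
      exact hgV
  have hfin := key n le_rfl
  have e : (⟨n - n, by omega⟩ : Fin (n+1)) = 0 := by ext; simp
  rw [e, hc0] at hfin
  exact hfin

lemma myPResidualNormal (p : ℕ) (G : Type*) [Group G] : (pResidual p G).Normal := by
  constructor
  intro x hx g
  rw [pResidual, Subgroup.mem_sInf] at hx ⊢
  intro N hN
  exact hN.1.conj_mem x (hx N hN) g

lemma myPResidualLe {G : Type*} [Group G] [Finite G] {p : ℕ} (hp : p.Prime) {T : Subgroup G}
    (hT : ∀ g : G, ¬ p ∣ orderOf g → g ∈ T) : pResidual p G ≤ T := by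
  set S : Set G := {g : G | ¬ p ∣ orderOf g} with hS
  set N : Subgroup G := Subgroup.closure S with hN
  have hNnormal : N.Normal := by
    constructor
    intro x hx g
    have himg : (MulAut.conj g).toMonoidHom '' S ⊆ S := by
      rintro _ ⟨y, hy, rfl⟩
      have e : orderOf ((MulAut.conj g).toMonoidHom y) = orderOf y :=
        orderOf_injective (MulAut.conj g).toMonoidHom (MulAut.conj g).injective y
      show ¬ p ∣ orderOf ((MulAut.conj g).toMonoidHom y)
      rw [e]; exact hy
    have hmap : N.map (MulAut.conj g).toMonoidHom ≤ N := by
      rw [hN, MonoidHom.map_closure]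
      exact Subgroup.closure_mono himg
    have : (MulAut.conj g).toMonoidHom x ∈ N := hmap ⟨x, hx, rfl⟩
    simpa using this
  have hNres : ∀ g : G, ∃ k : ℕ, g ^ p ^ k ∈ N := by
    intro g
    refine ⟨(orderOf g).factorization p, Subgroup.subset_closure ?_⟩
    show ¬ p ∣ orderOf (g ^ p ^ (orderOf g).factorization p)
    have ho : orderOf g ≠ 0 := (orderOf_pos g).ne'
    have hdvd : p ^ (orderOf g).factorization p ∣ orderOf g := Nat.ordProj_dvd _ _
    rw [orderOf_pow' g (pow_ne_zero _ hp.ne_zero), Nat.gcd_eq_right hdvd]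
    exact Nat.not_dvd_ordCompl hp ho
  have h1 : pResidual p G ≤ N := sInf_le ⟨hNnormal, hNres⟩
  have h2 : N ≤ T := (Subgroup.closure_le T).mpr (fun g hg => hT g hg)
  exact h1.trans h2




lemma myMemMapIff {G : Type*} [Group G] {K : Subgroup G} [K.Normal] (D : Subgroup G) (z : G) :
    QuotientGroup.mk' K z ∈ D.map (QuotientGroup.mk' K) ↔ z ∈ D ⊔ K := by
  rw [← Subgroup.mem_comap, Subgroup.comap_map_eq, QuotientGroup.ker_mk']

lemma myNormCompare {G : Type*} [Group G] {K K' D : Subgroup G} [hK : K.Normal] [hK' : K'.Normal] (hle : K' ≤ K) :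
    (Subgroup.normalizer ((D.map (QuotientGroup.mk' K')) : Set (G ⧸ K'))).comap (QuotientGroup.mk' K') ≤
    (Subgroup.normalizer ((D.map (QuotientGroup.mk' K)) : Set (G ⧸ K))).comap (QuotientGroup.mk' K) := by
  intro g hg
  rw [Subgroup.mem_comap, Subgroup.mem_normalizer_iff] at hg ⊢
  have hstab : ∀ y : G, y ∈ D ⊔ K' ↔ g * y * g⁻¹ ∈ D ⊔ K' := by
    intro y
    have h1 := hg (QuotientGroup.mk' K' y)
    have e2 : QuotientGroup.mk' K' g * QuotientGroup.mk' K' y * (QuotientGroup.mk' K' g)⁻¹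
        = QuotientGroup.mk' K' (g * y * g⁻¹) := by
      rw [← map_inv, ← map_mul, ← map_mul]
    rw [e2, myMemMapIff, myMemMapIff] at h1
    exact h1
  have hstab' : ∀ z : G, z ∈ D ⊔ K' → g⁻¹ * z * g ∈ D ⊔ K' := by
    intro z hz
    apply (hstab (g⁻¹ * z * g)).mpr
    have e : g * (g⁻¹ * z * g) * g⁻¹ = z := by group
    rw [e]; exact hz
  have hDK : D ⊔ K = (D ⊔ K') ⊔ K := by
    rw [sup_assoc, sup_eq_right.mpr hle]
  intro h
  obtain ⟨y, rfl⟩ := QuotientGroup.mk'_surjective K h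
  have e2 : QuotientGroup.mk' K g * QuotientGroup.mk' K y * (QuotientGroup.mk' K g)⁻¹
      = QuotientGroup.mk' K (g * y * g⁻¹) := by
    rw [← map_inv, ← map_mul, ← map_mul]
  rw [e2, myMemMapIff, myMemMapIff]
  constructor
  · intro hy
    rw [hDK] at hy ⊢
    obtain ⟨z, hz, kk, hkk, hzk⟩ := by
      haveI := hK
      have h1 : y ∈ (((D ⊔ K') ⊔ K : Subgroup G) : Set G) := hy
      rw [Subgroup.mul_normal] at h1
      exact Set.mem_mul.mp h1
    have : g * y * g⁻¹ = (g * z * g⁻¹) * (g * kk * g⁻¹) := by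
      rw [← hzk]; group
    rw [this]
    exact mul_mem (Subgroup.mem_sup_left ((hstab z).mp hz))
      (Subgroup.mem_sup_right (hK.conj_mem kk hkk g))
  · intro hy
    rw [hDK] at hy ⊢
    obtain ⟨z, hz, kk, hkk, hzk⟩ := by
      have h1 : g * y * g⁻¹ ∈ (((D ⊔ K') ⊔ K : Subgroup G) : Set G) := hy
      rw [Subgroup.mul_normal] at h1
      exact Set.mem_mul.mp h1
    have : y = (g⁻¹ * z * g) * (g⁻¹ * kk * g) := by
      have e3 : y = g⁻¹ * (g * y * g⁻¹) * g := by group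
      rw [e3, ← hzk]; group
    rw [this]
    refine mul_mem (Subgroup.mem_sup_left (hstab' z hz)) (Subgroup.mem_sup_right ?_)
    have := hK.conj_mem kk hkk g⁻¹
    simpa using this

variable {G : Type*} [Group G]

lemma myChief {K L R : Subgroup G} [hK : K.Normal] (hL : L.Normal) (hR : R.Normal)
    (hKL : K ≤ L) (hmin : IsMinimalNormal (L.map (QuotientGroup.mk' K)))
    (hMR : L.map (QuotientGroup.mk' K) ≤ R.map (QuotientGroup.mk' K)) :
    L = (L ⊓ R) ⊔ K ∧
      (letI h' : ((L ⊓ R) ⊓ K).Normal := myNormalInf (myNormalInf hL hR) hK;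
        IsMinimalNormal ((L ⊓ R).map (QuotientGroup.mk' ((L ⊓ R) ⊓ K)))) := by
  set f := QuotientGroup.mk' K with hf
  set R₁ := L ⊓ R with hR₁def
  set K' := R₁ ⊓ K with hK'def
  have hR₁n : R₁.Normal := myNormalInf hL hR
  have hK'n : K'.Normal := myNormalInf hR₁n hK
  letI := hK'n
  set f' := QuotientGroup.mk' K' with hf'
  have hK'R₁ : K' ≤ R₁ := inf_le_left
  have hK'K : K' ≤ K := inf_le_right
  have hLRK : L ≤ R ⊔ K := by
    have h1 : L ≤ (R.map f).comap f := Subgroup.map_le_iff_le_comap.mp hMR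
    rwa [Subgroup.comap_map_eq, QuotientGroup.ker_mk'] at h1
  have hLsup : L = R₁ ⊔ K := by
    apply le_antisymm
    · intro x hx
      obtain ⟨r, hr, k, hk, hrk⟩ := myMemSupNormal hK (hLRK hx)
      have hrL : r ∈ L := by
        have e : r = x * k⁻¹ := by rw [← hrk]; group
        rw [e]; exact mul_mem hx (inv_mem (hKL hk))
      rw [← hrk]
      exact mul_mem (Subgroup.mem_sup_left ⟨hrL, hr⟩) (Subgroup.mem_sup_right hk)
    · exact sup_le inf_le_left hKL
  refine ⟨hLsup, ?_⟩
  refine ⟨hR₁n.map _ (QuotientGroup.mk'_surjective K'), ?_, ?_⟩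
  · -- nontrivial
    intro hbot
    rw [Subgroup.map_eq_bot_iff, QuotientGroup.ker_mk'] at hbot
    have hLK : L = K := le_antisymm (by rw [hLsup]; exact sup_le (hbot.trans hK'K) le_rfl) hKL
    apply hmin.2.1
    rw [Subgroup.map_eq_bot_iff, QuotientGroup.ker_mk', hLK]
  · -- minimality
    intro N hNnorm hNle
    by_contra hcon
    push_neg at hcon
    obtain ⟨hNbot, hNne⟩ := hcon
    set X := N.comap f' with hX
    have hXnorm : X.Normal := hNnorm.comap f'
    have hK'X : K' ≤ X := by
      intro x hx
      rw [hX, Subgroup.mem_comap]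
      have : f' x = 1 := by
        rw [hf', QuotientGroup.mk'_apply, QuotientGroup.eq_one_iff]; exact hx
      rw [this]; exact N.one_mem
    have hXR₁ : X ≤ R₁ := by
      have h1 : X ≤ (R₁.map f').comap f' := Subgroup.comap_mono hNle
      rwa [Subgroup.comap_map_eq, QuotientGroup.ker_mk', sup_eq_left.mpr hK'R₁] at h1
    have hNX : N = X.map f' := (Subgroup.map_comap_eq_self_of_surjective
      (QuotientGroup.mk'_surjective K') N).symm
    set W := X ⊔ K with hW
    have hWnorm : W.Normal := by
      constructor
      intro x hx g
      obtain ⟨a, ha, b, hb, hab⟩ := myMemSupNormal hK hx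
      have e : g * x * g⁻¹ = (g * a * g⁻¹) * (g * b * g⁻¹) := by rw [← hab]; group
      rw [e]
      exact mul_mem (Subgroup.mem_sup_left (hXnorm.conj_mem a ha g))
        (Subgroup.mem_sup_right (hK.conj_mem b hb g))
    have hWL : W ≤ L := sup_le (hXR₁.trans inf_le_left) hKL
    have hWmapnorm : (W.map f).Normal := hWnorm.map f (QuotientGroup.mk'_surjective K)
    have hWmaple : W.map f ≤ L.map f := Subgroup.map_mono hWL
    rcases hmin.2.2 (W.map f) hWmapnorm hWmaple with hbot | heq
    · -- W ≤ K, so X ≤ K', so N = ⊥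
      rw [Subgroup.map_eq_bot_iff, QuotientGroup.ker_mk'] at hbot
      have hXK : X ≤ K := le_trans le_sup_left hbot
      have hXK' : X = K' := le_antisymm (le_inf hXR₁ hXK) hK'X
      apply hNbot
      rw [hNX, hXK', Subgroup.map_eq_bot_iff, QuotientGroup.ker_mk']
    · -- W = L, then R₁ ≤ X, so N = M'
      have hWL' : W = L := by
        have h1 := congrArg (fun S => Subgroup.comap f S) heq
        have h2 : W ⊔ K = L := by
          simpa [hf, Subgroup.comap_map_eq, QuotientGroup.ker_mk',
            sup_eq_left.mpr (le_sup_right : K ≤ W), sup_eq_left.mpr hKL] using h1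
        rwa [sup_eq_left.mpr (le_sup_right : K ≤ W)] at h2
      apply hNne
      have hR₁X : R₁ ≤ X := by
        intro r hr
        have hrL : r ∈ W := hWL' ▸ (inf_le_left : R₁ ≤ L) hr
        obtain ⟨x, hx, k, hk, hxk⟩ := myMemSupNormal hK hrL
        have hkR₁ : k ∈ R₁ := by
          have e : k = x⁻¹ * r := by rw [← hxk]; group
          rw [e]; exact mul_mem (inv_mem (hXR₁ hx)) hr
        have : k ∈ X := hK'X ⟨hkR₁, hk⟩
        rw [← hxk]; exact mul_mem hx this
      rw [hNX, le_antisymm hXR₁ hR₁X]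

end Aux

theorem stmt13 {G : Type*} [Group G] [Finite G] (p : ℕ) (hp : p.Prime)
    (hdvd : p ∣ Nat.card G) (H : Subgroup G) (hH : IsPGroup p H)
    (h : ∃ T I : Subgroup G, IsSubnormal T ∧ (H : Set G) * (T : Set G) = Set.univ ∧
      H ⊓ T ≤ I ∧ I ≤ H ∧ PiProperty I) :
    PiProperty (H ⊓ pResidual p G) := by
  obtain ⟨T, I, hTsub, hcov, hHTI, hIH, hPiI⟩ := h
  have hRnorm : (pResidual p G).Normal := myPResidualNormal p G
  have hRT : pResidual p G ≤ T :=
    myPResidualLe hp (fun g hg => myPPrimeMem hp hH hTsub hcov hg)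
  intro K L hK hCF
  haveI := hK
  intro q hq hqidx
  obtain ⟨hLnorm, hKL, hmin⟩ := hCF
  have hsurj := QuotientGroup.mk'_surjective K
  have hMRnorm : (L.map (QuotientGroup.mk' K) ⊓ (pResidual p G).map (QuotientGroup.mk' K)).Normal :=
    myNormalInf (hLnorm.map _ hsurj) (hRnorm.map _ hsurj)
  rcases hmin.2.2 _ hMRnorm inf_le_left with hbot | heq
  · -- avoidance case : the intersection is trivial
    have hA : (H ⊓ pResidual p G).map (QuotientGroup.mk' K) ⊓ L.map (QuotientGroup.mk' K) = ⊥ := by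
      rw [eq_bot_iff, ← hbot]
      exact le_inf inf_le_right
        (le_trans inf_le_left (Subgroup.map_mono inf_le_right))
    rw [hA, myNormalizerBot, Subgroup.index_top] at hqidx
    exact absurd (Nat.dvd_one.mp hqidx) hq.ne_one
  · -- covering case
    have hMR : L.map (QuotientGroup.mk' K) ≤ (pResidual p G).map (QuotientGroup.mk' K) := by
      rw [← heq]; exact inf_le_right
    obtain ⟨hLsup, hminR₁⟩ := myChief hLnorm hRnorm hKL hmin hMR
    have hR₁n : (L ⊓ pResidual p G).Normal := myNormalInf hLnorm hRnorm
    have hK'n : ((L ⊓ pResidual p G) ⊓ K).Normal := myNormalInf hR₁n hK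
    haveI := hK'n
    have hDeq : (H ⊓ pResidual p G) ⊓ L = I ⊓ (L ⊓ pResidual p G) := by
      apply le_antisymm
      · rintro x ⟨⟨hxH, hxR⟩, hxL⟩
        exact ⟨hHTI ⟨hxH, hRT hxR⟩, hxL, hxR⟩
      · rintro x ⟨hxI, hxL, hxR⟩
        exact ⟨⟨hIH hxI, hxR⟩, hxL⟩
    have hE3 : (H ⊓ pResidual p G).map (QuotientGroup.mk' K) ⊓ L.map (QuotientGroup.mk' K)
        = (I ⊓ (L ⊓ pResidual p G)).map (QuotientGroup.mk' K) := by
      rw [myMapInf (QuotientGroup.mk' K) (by rw [QuotientGroup.ker_mk']; exact hKL), hDeq]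
    have hE2 : I.map (QuotientGroup.mk' ((L ⊓ pResidual p G) ⊓ K))
          ⊓ (L ⊓ pResidual p G).map (QuotientGroup.mk' ((L ⊓ pResidual p G) ⊓ K))
        = (I ⊓ (L ⊓ pResidual p G)).map (QuotientGroup.mk' ((L ⊓ pResidual p G) ⊓ K)) :=
      myMapInf _ (by rw [QuotientGroup.ker_mk']; exact inf_le_left)
    have hchief : IsChiefFactor ((L ⊓ pResidual p G) ⊓ K) (L ⊓ pResidual p G) hK'n :=
      ⟨hR₁n, inf_le_left, hminR₁⟩
    have happly := hPiI _ _ hK'n hchief q hq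
    rw [hE3] at hqidx
    have hidx : q ∣ (Subgroup.normalizer ((I.map (QuotientGroup.mk' ((L ⊓ pResidual p G) ⊓ K))
        ⊓ (L ⊓ pResidual p G).map (QuotientGroup.mk' ((L ⊓ pResidual p G) ⊓ K)) : Subgroup (G ⧸ ((L ⊓ pResidual p G) ⊓ K))) : Set (G ⧸ ((L ⊓ pResidual p G) ⊓ K)))).index := by
      rw [hE2]
      calc q ∣ (Subgroup.normalizer (((I ⊓ (L ⊓ pResidual p G)).map
            (QuotientGroup.mk' K) : Subgroup (G ⧸ K)) : Set (G ⧸ K))).index := hqidx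
        _ = ((Subgroup.normalizer (((I ⊓ (L ⊓ pResidual p G)).map
            (QuotientGroup.mk' K) : Subgroup (G ⧸ K)) : Set (G ⧸ K))).comap (QuotientGroup.mk' K)).index :=
          (Subgroup.index_comap_of_surjective _ hsurj).symm
        _ ∣ ((Subgroup.normalizer (((I ⊓ (L ⊓ pResidual p G)).map
            (QuotientGroup.mk' ((L ⊓ pResidual p G) ⊓ K)) : Subgroup (G ⧸ ((L ⊓ pResidual p G) ⊓ K))) : Set (G ⧸ ((L ⊓ pResidual p G) ⊓ K)))).comap
            (QuotientGroup.mk' ((L ⊓ pResidual p G) ⊓ K))).index :=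
          Subgroup.index_dvd_of_le (myNormCompare inf_le_right)
        _ = (Subgroup.normalizer (((I ⊓ (L ⊓ pResidual p G)).map
            (QuotientGroup.mk' ((L ⊓ pResidual p G) ⊓ K)) : Subgroup (G ⧸ ((L ⊓ pResidual p G) ⊓ K))) : Set (G ⧸ ((L ⊓ pResidual p G) ⊓ K)))).index :=
          Subgroup.index_comap_of_surjective _
            (QuotientGroup.mk'_surjective ((L ⊓ pResidual p G) ⊓ K))
    have hcard := happly hidx
    rw [hE2] at hcard
    haveI : Fact p.Prime := ⟨hp⟩
    have hDp : IsPGroup p (I ⊓ (L ⊓ pResidual p G) : Subgroup G) :=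
      hH.to_le (le_trans inf_le_left hIH)
    obtain ⟨m, hm⟩ := IsPGroup.iff_card.mp (hDp.map (QuotientGroup.mk' ((L ⊓ pResidual p G) ⊓ K)))
    have hqp : q = p := by
      have hd : q ∣ p ^ m := hm ▸ hcard
      exact (Nat.prime_dvd_prime_iff_eq hq hp).mp (hq.dvd_of_dvd_pow hd)
    rw [hE3, hqp]
    obtain ⟨m', hm'⟩ := IsPGroup.iff_card.mp (hDp.map (QuotientGroup.mk' K))
    rw [hm']
    rcases Nat.eq_zero_or_pos m' with h0 | hpos
    · exfalso
      have hbotD : (I ⊓ (L ⊓ pResidual p G)).map (QuotientGroup.mk' K) = ⊥ :=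
        Subgroup.card_eq_one.mp (by rw [hm', h0, pow_zero])
      rw [hbotD, myNormalizerBot, Subgroup.index_top] at hqidx
      exact hq.ne_one (Nat.dvd_one.mp hqidx)
    · exact dvd_pow_self p hpos.ne'
end

section
/- Let H be a c-normal p-subgroup of a finite group G for a prime p dividing |G|. Then H ∩ O^p(G) satisfies the Π-property in G. -/
open scoped Pointwise

theorem stmt14 {G : Type*} [Group G] [Finite G] (p : ℕ) (hp : p.Prime)
    (hdvd : p ∣ Nat.card G) (H : Subgroup G) (hH : IsPGroup p H)
    (h : ∃ T : Subgroup G, T.Normal ∧ (H : Set G) * (T : Set G) = Set.univ ∧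
      H ⊓ T ≤ H.normalCore) :
    PiProperty (H ⊓ pResidual p G) := by
  obtain ⟨T, hTnorm, hHT, hcore⟩ := h
  -- O^p(G) ≤ T
  have hRT : pResidual p G ≤ T := by
    apply sInf_le
    refine ⟨hTnorm, fun g => ?_⟩
    have hsurj : Function.Surjective ((QuotientGroup.mk' T).comp H.subtype) := by
      intro x
      obtain ⟨g, rfl⟩ := QuotientGroup.mk'_surjective T x
      have : g ∈ (H : Set G) * (T : Set G) := by rw [hHT]; trivial
      obtain ⟨a, ha, b, hb, rfl⟩ := this
      refine ⟨⟨a, ha⟩, ?_⟩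
      simp only [MonoidHom.comp_apply, Subgroup.coe_subtype, QuotientGroup.mk'_apply]
      refine (QuotientGroup.eq).2 ?_
      simpa using hb
    have hPQ : IsPGroup p (G ⧸ T) := fun x => by
      obtain ⟨h, rfl⟩ := hsurj x
      obtain ⟨k, hk⟩ := hH h
      exact ⟨k, by rw [← map_pow, hk, map_one]⟩
    obtain ⟨k, hk⟩ := hPQ (QuotientGroup.mk' T g)
    refine ⟨k, (QuotientGroup.eq_one_iff _).1 ?_⟩
    simpa [map_pow] using hk
  have hRnorm : (pResidual p G).Normal := by
    constructor
    intro n hn g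
    rw [pResidual, Subgroup.mem_sInf] at hn ⊢
    intro N hN
    exact hN.1.conj_mem n (hn N hN) g
  -- H ⊓ pResidual = H.normalCore ⊓ pResidual, which is normal
  have hXeq : H ⊓ pResidual p G = H.normalCore ⊓ pResidual p G := by
    apply le_antisymm
    · exact le_inf (le_trans (le_inf inf_le_left (le_trans inf_le_right hRT)) hcore)
        inf_le_right
    · exact inf_le_inf_left _ (le_refl _) |>.trans
        (inf_le_inf_right _ H.normalCore_le)
  have hXnorm : (H ⊓ pResidual p G).Normal := by
    rw [hXeq]
    have := H.normalCore_normal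
    exact Subgroup.normal_inf_normal _ _
  -- Normal subgroups trivially satisfy the Π-property
  intro K L hK hchief q hq hqdvd
  have hmapnorm : ((H ⊓ pResidual p G).map (QuotientGroup.mk' K)).Normal :=
    hXnorm.map _ (QuotientGroup.mk'_surjective K)
  have hLnorm : (L.map (QuotientGroup.mk' K)).Normal :=
    hchief.1.map _ (QuotientGroup.mk'_surjective K)
  have hinf : ((H ⊓ pResidual p G).map (QuotientGroup.mk' K) ⊓
      L.map (QuotientGroup.mk' K)).Normal := Subgroup.normal_inf_normal _ _
  rw [← Subgroup.normalizer_eq_top_iff] at hinf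
  rw [hinf, Subgroup.index_top] at hqdvd
  exact absurd (Nat.eq_one_of_dvd_one hqdvd) hq.ne_one
end

section
/- Let P be a p-subgroup of a finite group G and T a subnormal subgroup of G with G = PT. Then O^p(T) = O^p(G). -/
open scoped Pointwise

namespace Aux15

variable {K : Type*} [Group K]

lemma normal_closure_of_conj {S : Set K} (h : ∀ g : K, ∀ x ∈ S, g * x * g⁻¹ ∈ S) :
    (Subgroup.closure S).Normal := by
  constructor
  intro n hn g
  have hle : Subgroup.closure S ≤ (Subgroup.closure S).comap (MulAut.conj g).toMonoidHom := by
    rw [Subgroup.closure_le]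
    intro x hx
    exact Subgroup.subset_closure (by simpa [MulAut.conj] using h g x hx)
  simpa [MulAut.conj] using hle hn

lemma pprime_conj (g x : K) (p : ℕ) (hx : ¬ p ∣ orderOf x) : ¬ p ∣ orderOf (g * x * g⁻¹) := by
  have : orderOf (g * x * g⁻¹) = orderOf x := by
    rw [show g * x * g⁻¹ = (MulAut.conj g).toMonoidHom x by simp [MulAut.conj]]
    exact orderOf_injective _ (MulAut.conj g).injective x
  rwa [this]

variable {p : ℕ}

lemma pow_mem_pprime_closure (hp : p.Prime) [Finite K] (g : K) :
    g ^ p ^ (orderOf g).factorization p ∈ Subgroup.closure {x : K | ¬ p ∣ orderOf x} := by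
  apply Subgroup.subset_closure
  have hg : orderOf g ≠ 0 := (orderOf_pos g).ne'
  have hdvd : p ^ (orderOf g).factorization p ∣ orderOf g := Nat.ordProj_dvd _ _
  have : orderOf (g ^ p ^ (orderOf g).factorization p) =
      orderOf g / p ^ (orderOf g).factorization p := by
    rw [orderOf_pow, Nat.gcd_eq_right hdvd]
  rw [Set.mem_setOf_eq, this]
  exact Nat.not_dvd_ordCompl hp hg

lemma pprime_closure_le (hp : p.Prime) {N : Subgroup K}
    (hN : ∀ g : K, ∃ k : ℕ, g ^ p ^ k ∈ N) :
    Subgroup.closure {x : K | ¬ p ∣ orderOf x} ≤ N := by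
  rw [Subgroup.closure_le]
  intro x hx
  obtain ⟨k, hk⟩ := hN x
  have hcop : (p ^ k).Coprime (orderOf x) :=
    Nat.Coprime.pow_left _ ((Nat.Prime.coprime_iff_not_dvd hp).mpr hx)
  obtain ⟨m, hm⟩ := exists_pow_eq_self_of_coprime hcop
  rw [← hm]
  exact pow_mem hk m

lemma pResidual_eq (hp : p.Prime) [Finite K] :
    pResidual p K = Subgroup.closure {x : K | ¬ p ∣ orderOf x} := by
  apply le_antisymm
  · apply sInf_le
    refine ⟨normal_closure_of_conj fun g x hx => pprime_conj g x p hx, fun g => ⟨_, pow_mem_pprime_closure hp g⟩⟩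
  · exact le_sInf fun N hN => pprime_closure_le hp hN.2

lemma pResidual_normal (hp : p.Prime) [Finite K] : (pResidual p K).Normal := by
  rw [pResidual_eq hp]
  exact normal_closure_of_conj fun g x hx => pprime_conj g x p hx

lemma pow_mem_pResidual (hp : p.Prime) [Finite K] (g : K) : ∃ k, g ^ p ^ k ∈ pResidual p K := by
  rw [pResidual_eq hp]
  exact ⟨_, pow_mem_pprime_closure hp g⟩

lemma index_pResidual_isPPow (hp : p.Prime) [Finite K] :
    ∃ n : ℕ, (pResidual p K).index = p ^ n := by
  haveI : Fact p.Prime := ⟨hp⟩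
  haveI := pResidual_normal (K := K) hp
  have hpg : IsPGroup p (K ⧸ pResidual p K) := by
    intro q
    induction q using QuotientGroup.induction_on with
    | _ g =>
      obtain ⟨k, hk⟩ := pow_mem_pResidual (K := K) hp g
      exact ⟨k, by rw [← QuotientGroup.mk_pow]; exact (QuotientGroup.eq_one_iff _).mpr hk⟩
  obtain ⟨n, hn⟩ := IsPGroup.iff_card.mp hpg
  exact ⟨n, by rw [Subgroup.index_eq_card, hn]⟩

lemma orderOf_coe {G : Type*} [Group G] {H : Subgroup G} (y : ↥H) :
    orderOf (y : G) = orderOf y :=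
  orderOf_injective H.subtype Subtype.coe_injective y

/-- The subgroup of `G` generated by the `p'`-elements of `H`. -/
def Rp (p : ℕ) {G : Type*} [Group G] (H : Subgroup G) : Subgroup G :=
  Subgroup.closure {x : G | x ∈ H ∧ ¬ p ∣ orderOf x}

lemma Rp_mono {G : Type*} [Group G] {H K : Subgroup G} (h : H ≤ K) : Rp p H ≤ Rp p K :=
  Subgroup.closure_mono fun x hx => ⟨h hx.1, hx.2⟩

lemma map_pResidual_eq_Rp {G : Type*} [Group G] (hp : p.Prime) [Finite G] (H : Subgroup G) :
    (pResidual p ↥H).map H.subtype = Rp p H := by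
  rw [pResidual_eq hp, MonoidHom.map_closure]
  congr 1
  ext x
  simp only [Set.mem_image, Set.mem_setOf_eq]
  constructor
  · rintro ⟨y, hy, rfl⟩
    exact ⟨y.2, by simp only [Subgroup.coe_subtype, orderOf_coe]; exact hy⟩
  · rintro ⟨hxH, hx⟩
    exact ⟨⟨x, hxH⟩, by rw [← orderOf_coe]; exact hx, rfl⟩

lemma map_Rp_subgroupOf {G : Type*} [Group G] {T S : Subgroup G} (hTS : T ≤ S) :
    (Rp p (T.subgroupOf S)).map S.subtype = Rp p T := by
  rw [Rp, MonoidHom.map_closure]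
  congr 1
  ext x
  simp only [Set.mem_image, Set.mem_setOf_eq, Subgroup.mem_subgroupOf]
  constructor
  · rintro ⟨y, ⟨hy, hyo⟩, rfl⟩
    exact ⟨hy, by simp only [Subgroup.coe_subtype, orderOf_coe]; exact hyo⟩
  · rintro ⟨hxT, hx⟩
    exact ⟨⟨x, hTS hxT⟩, ⟨hxT, by rw [← orderOf_coe]; exact hx⟩, rfl⟩

/-- Key step: if `N` is normal in finite `K`, `A` a `p`-subgroup with `K = AN`, then
`O^p(K) ≤ ⟨p'-elements of N⟩`. -/
lemma step (hp : p.Prime) [Finite K] {A N : Subgroup K} (hN : N.Normal)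
    (hA : IsPGroup p A) (hAN : ∀ k : K, ∃ a ∈ A, ∃ n ∈ N, k = a * n) :
    Subgroup.closure {x : K | ¬ p ∣ orderOf x} ≤ Rp p N := by
  haveI : Fact p.Prime := ⟨hp⟩
  haveI hRnorm : (Rp p N).Normal := by
    unfold Rp
    exact normal_closure_of_conj fun g x hx => ⟨hN.conj_mem x hx.1 g, pprime_conj g x p hx.2⟩
  have hRle : Rp p N ≤ N := by
    unfold Rp
    exact (Subgroup.closure_le N).mpr fun x hx => hx.1
  -- index of N is a p-power divisor
  have hNindex : N.index ∣ Nat.card A := by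
    haveI := hN
    have hsurj : Function.Surjective ((QuotientGroup.mk' N).comp A.subtype) := by
      intro q
      induction q using QuotientGroup.induction_on with
      | _ k =>
        obtain ⟨a, ha, n, hn, rfl⟩ := hAN k
        refine ⟨⟨a, ha⟩, ?_⟩
        show QuotientGroup.mk a = QuotientGroup.mk (a * n)
        rw [QuotientGroup.eq]
        simpa using hn
    rw [Subgroup.index_eq_card]
    exact Subgroup.card_dvd_of_surjective _ hsurj
  obtain ⟨a, hcardA⟩ := IsPGroup.iff_card.mp hA
  -- relindex of R in N is a p-power
  have hsub : (Rp p N).subgroupOf N = pResidual p ↥N := by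
    have := map_pResidual_eq_Rp (p := p) hp N
    rw [← this, Subgroup.subgroupOf, Subgroup.comap_map_eq_self_of_injective Subtype.coe_injective]
  obtain ⟨b, hb⟩ := index_pResidual_isPPow (K := ↥N) hp
  have hrel : (Rp p N).relIndex N = p ^ b := by rw [Subgroup.relIndex, hsub, hb]
  -- total index of R is a p-power
  have hRindex : ∃ m, (Rp p N).index = p ^ m := by
    obtain ⟨c, hc, hceq⟩ := (Nat.dvd_prime_pow hp).mp (hcardA ▸ hNindex)
    exact ⟨b + c, by rw [← Subgroup.relIndex_mul_index hRle, hrel, hceq, pow_add]⟩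
  obtain ⟨m, hm⟩ := hRindex
  -- quotient is a p-group; p'-elements die
  rw [Subgroup.closure_le]
  intro x hx
  have hcard : Nat.card (K ⧸ Rp p N) = p ^ m := by rw [← Subgroup.index_eq_card, hm]
  have h1 : orderOf ((QuotientGroup.mk' (Rp p N)) x) ∣ p ^ m := hcard ▸ orderOf_dvd_natCard _
  have h2 : orderOf ((QuotientGroup.mk' (Rp p N)) x) ∣ orderOf x := orderOf_map_dvd _ _
  have hcop : (p ^ m).Coprime (orderOf x) :=
    Nat.Coprime.pow_left _ ((Nat.Prime.coprime_iff_not_dvd hp).mpr hx)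
  have : orderOf ((QuotientGroup.mk' (Rp p N)) x) = 1 :=
    Nat.dvd_one.mp (hcop ▸ Nat.dvd_gcd h1 h2)
  have hx1 : (QuotientGroup.mk' (Rp p N)) x = 1 := orderOf_eq_one_iff.mp this
  exact (QuotientGroup.eq_one_iff x).mp hx1

end Aux15

theorem stmt15 {G : Type*} [Group G] [Finite G] (p : ℕ) (hp : p.Prime)
    (P T : Subgroup G) (hP : IsPGroup p P) (hT : IsSubnormal T)
    (hPT : (P : Set G) * (T : Set G) = Set.univ) :
    (pResidual p ↥T).map T.subtype = pResidual p G := by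
  classical
  obtain ⟨n, c, hc0, hclast, hstep⟩ := hT
  have key : ∀ i : Fin (n + 1), T ≤ c i ∧ Aux15.Rp p (c i) = Aux15.Rp p T := by
    intro i
    induction i using Fin.induction with
    | zero => exact ⟨hc0.ge, by rw [hc0]⟩
    | succ i ih =>
      obtain ⟨hTle, hRp⟩ := ih
      have hle : c i.castSucc ≤ c i.succ := (hstep i).1
      refine ⟨hTle.trans hle, ?_⟩
      apply le_antisymm
      · rw [← hRp]
        have hAN : ∀ k : ↥(c i.succ), ∃ a ∈ P.subgroupOf (c i.succ),
            ∃ m ∈ (c i.castSucc).subgroupOf (c i.succ), k = a * m := by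
          intro k
          have hk : (k : G) ∈ (P : Set G) * (T : Set G) := by rw [hPT]; trivial
          obtain ⟨a, ha, t, ht, hat⟩ := hk
          have htT' : t ∈ c i.castSucc := hTle ht
          have htS : t ∈ c i.succ := hle htT'
          have haS : a ∈ c i.succ := by
            have ha' : a = (k : G) * t⁻¹ := by rw [← hat]; group
            rw [ha']
            exact mul_mem k.2 (inv_mem htS)
          refine ⟨⟨a, haS⟩, ?_, ⟨t, htS⟩, ?_, ?_⟩
          · exact ha
          · exact htT'
          · exact Subtype.ext hat.symm
        have happ := Aux15.step hp (hstep i).2 (hP.comap_subtype (K := c i.succ)) hAN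
        have hmap := Subgroup.map_mono (f := (c i.succ).subtype) happ
        rw [Aux15.map_Rp_subgroupOf hle, ← Aux15.pResidual_eq hp,
          Aux15.map_pResidual_eq_Rp hp] at hmap
        exact hmap
      · exact Aux15.Rp_mono (hTle.trans hle)
  rw [Aux15.map_pResidual_eq_Rp hp, ← (key (Fin.last n)).2, hclast,
    Aux15.pResidual_eq hp]
  unfold Aux15.Rp
  congr 1
  ext x
  simp
end
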